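/- arXiv:1707.04341 — 2 statements merged into one kernel-verified Lean document; each statement's English description precedes it below -/
import Mathlib

section
/- Let X be a totally ordered set and F : X^n → X (n ≥ 3) an n-associative, idempotent, nondecreasing function. Then for every 1 ≤ i ≤ n-2 and x_1,...,x_{n-1} ∈ X: F(x_1,...,x_{i-1}, x_i, x_i, x_{i+1},...,x_{n-1}) = F(x_1,...,x_i, x_{i+1}, x_{i+1}, x_{i+2},...,x_{n-1}) (doubling the i-th argument gives the same value as doubling the (i+1)-st). -/
/-!
Write `g t` for `F` evaluated at `x 0, …, x i, t, x (i+1), …, x (n-2)`, so the two sides are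
`g (x i)` and `g (x (i+1))`. Re-associating a constant block of length `n` (which idempotence lets
us insert anywhere) shows `g (x i) = g (F (x i, x (i+1), …, x (i+1)))` and
`g (x (i+1)) = g (F (x i, …, x i, x (i+1)))`. If `x i ≤ x (i+1)`, monotonicity then gives
`g (x i) ≤ g (x (i+1)) = g (F (x i, …, x i, x (i+1)))
  ≤ g (F (x i, x (i+1), …, x (i+1))) = g (x i)`,
and symmetrically otherwise.
-/

/-- `innerApp n F x i` is `F (x i, x (i+1), ..., x (i+n-1))`. -/
def innerApp {X : Type*} (n : ℕ) (F : (Fin n → X) → X) (x : ℕ → X) (i : ℕ) : X :=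
  F (fun k => x (i + (k : ℕ)))

/-- `compApp n F x i` is `F (x 0, ..., x (i-1), F (x i, ..., x (i+n-1)), x (i+n), ..., x (2n-2))`,
i.e. `F` applied to the `(2n-1)`-tuple `x 0, ..., x (2n-2)` with the inner `F` at position `i`. -/
def compApp {X : Type*} (n : ℕ) (F : (Fin n → X) → X) (x : ℕ → X) (i : ℕ) : X :=
  F (fun j => if (j : ℕ) < i then x (j : ℕ)
      else if (j : ℕ) = i then innerApp n F x i
      else x ((j : ℕ) + n - 1))

/-- `F` is `n`-associative. -/
def NAssoc {X : Type*} (n : ℕ) (F : (Fin n → X) → X) : Prop :=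
  ∀ (x : ℕ → X) (i : ℕ), i ≤ n - 1 → compApp n F x i = compApp n F x 0

/-- `F` is idempotent. -/
def Idem {X : Type*} (n : ℕ) (F : (Fin n → X) → X) : Prop :=
  ∀ a : X, F (fun _ => a) = a

/-- `F` is nondecreasing in each variable. -/
def Nondecr {X : Type*} [Preorder X] (n : ℕ) (F : (Fin n → X) → X) : Prop :=
  ∀ x y : Fin n → X, (∀ j, x j ≤ y j) → F x ≤ F y

/-- `F` is monotone: every unary section is order-preserving or order-reversing. -/
def MonoSec {X : Type*} [Preorder X] (n : ℕ) (F : (Fin n → X) → X) : Prop :=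
  ∀ (i : Fin n) (a : Fin n → X),
    Monotone (fun t => F (Function.update a i t)) ∨
      Antitone (fun t => F (Function.update a i t))

/-- `F` is quasitrivial. -/
def Quasitrivial {X : Type*} (n : ℕ) (F : (Fin n → X) → X) : Prop :=
  ∀ x : Fin n → X, ∃ j, F x = x j

/-- `F` is symmetric. -/
def Symm {X : Type*} (n : ℕ) (F : (Fin n → X) → X) : Prop :=
  ∀ (σ : Equiv.Perm (Fin n)) (x : Fin n → X), F (x ∘ σ) = F x

/-- `iterComp G x k = x 0 ∘ x 1 ∘ ... ∘ x k` where `a ∘ b = G a b`. -/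
def iterComp {X : Type*} (G : X → X → X) (x : ℕ → X) : ℕ → X
  | 0 => x 0
  | k+1 => G (iterComp G x k) (x (k+1))

/-- `F` is derived from the binary operation `G`:
`F (x 0, ..., x (n-1)) = x 0 ∘ x 1 ∘ ... ∘ x (n-1)`. -/
def DerivedFrom {X : Type*} (n : ℕ) (F : (Fin n → X) → X) (G : X → X → X) : Prop :=
  ∀ x : ℕ → X, F (fun j => x (j : ℕ)) = iterComp G x (n - 1)

/-- `e` is a neutral element of the `n`-ary operation `F`. -/
def NeutralN {X : Type*} (n : ℕ) (F : (Fin n → X) → X) (e : X) : Prop :=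
  ∀ (i : Fin n) (x : X), F (fun j => if j = i then x else e) = x

theorem Monotone.apply_eq_of_exchange {α β : Type*} [LinearOrder α] [PartialOrder β]
    {g : α → β} (hg : Monotone g) {a b u v : α} (hu : g u = g b) (hv : g v = g a)
    (huv : a ≤ b → u ≤ v) (hvu : b ≤ a → v ≤ u) : g a = g b := by
  rcases le_total a b with hab | hba
  · exact le_antisymm (hg hab) (hu ▸ hv ▸ hg (huv hab))
  · exact le_antisymm (hv ▸ hu ▸ hg (hvu hba)) (hg hba)

section

variable {X : Type*} {n : ℕ} {F : (Fin n → X) → X}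

theorem Nondecr.monotone [Preorder X] (hM : Nondecr n F) : Monotone F :=
  fun _ _ h => hM _ _ h

theorem Nondecr.apply_snoc_le_apply_cons [Preorder X] (hM : Nondecr n F) (hn : 2 ≤ n)
    {a b : X} (hab : a ≤ b) :
    F (fun k => if (k : ℕ) < n - 1 then a else b) ≤
      F (fun k => if (k : ℕ) = 0 then a else b) :=
  hM _ _ fun k => by split_ifs <;> first | exact le_rfl | exact hab | omega

theorem Nondecr.apply_cons_le_apply_snoc [Preorder X] (hM : Nondecr n F) (hn : 2 ≤ n)
    {a b : X} (hba : b ≤ a) :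
    F (fun k => if (k : ℕ) = 0 then a else b) ≤
      F (fun k => if (k : ℕ) < n - 1 then a else b) :=
  hM _ _ fun k => by split_ifs <;> first | exact le_rfl | exact hba | omega

theorem NAssoc.compApp_eq (hA : NAssoc n F) (x : ℕ → X) {i j : ℕ} (hi : i ≤ n - 1)
    (hj : j ≤ n - 1) : compApp n F x i = compApp n F x j :=
  (hA x i hi).trans (hA x j hj).symm

theorem Idem.innerApp_eq (hI : Idem n F) {x : ℕ → X} {i : ℕ} {a : X}
    (hx : ∀ k < n, x (i + k) = a) : innerApp n F x i = a := by
  rw [innerApp, funext fun k : Fin n => hx k k.isLt, hI]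

theorem NAssoc.absorb_left (hA : NAssoc n F) (hI : Idem n F) (z : ℕ → X) {p : ℕ}
    (hp : p + 2 ≤ n) (b : X) :
    F (fun j => if (j : ℕ) = p + 1 then b else z j) =
      F (fun j => if (j : ℕ) = p + 1 then F (fun k => if (k : ℕ) < n - 1 then z p else b)
        else z j) := by
  -- `z` with `z p` stretched to `n` copies, followed by `b`
  set w : ℕ → X := fun k =>
    if k < p then z k else if k < p + n then z p else if k = p + n then b else z (k - n + 1)
  have hblock : innerApp n F w p = z p :=
    hI.innerApp_eq fun k hk => by simp only [w]; split_ifs <;> first | rfl | omega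
  have hshift : innerApp n F w (p + 1) = F (fun k => if (k : ℕ) < n - 1 then z p else b) := by
    rw [innerApp]; congr 1; funext k; have := k.isLt
    simp only [w]; split_ifs <;> first | rfl | omega
  calc _ = compApp n F w p := by
        rw [compApp, hblock]; congr 1; funext j; have := j.isLt
        simp only [w]; split_ifs <;> first | rfl | omega | exact congrArg z (by omega)
    _ = compApp n F w (p + 1) := hA.compApp_eq w (by omega) (by omega)
    _ = _ := by
        rw [compApp, hshift]; congr 1; funext j; have := j.isLt
        simp only [w]; split_ifs <;> first | rfl | omega | exact congrArg z (by omega)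

theorem NAssoc.absorb_right (hA : NAssoc n F) (hI : Idem n F) (z : ℕ → X) {p : ℕ}
    (hp : p + 2 ≤ n) (a : X) :
    F (fun j => if (j : ℕ) = p then a else z j) =
      F (fun j => if (j : ℕ) = p then F (fun k => if (k : ℕ) = 0 then a else z (p + 1))
        else z j) := by
  -- `z` with `a` at `p`, followed by `n` copies of `z (p + 1)`
  set w : ℕ → X := fun k =>
    if k < p then z k else if k = p then a else if k ≤ p + n then z (p + 1) else z (k - n + 1)
  have hblock : innerApp n F w (p + 1) = z (p + 1) :=
    hI.innerApp_eq fun k hk => by simp only [w]; split_ifs <;> first | rfl | omega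
  have hshift : innerApp n F w p = F (fun k => if (k : ℕ) = 0 then a else z (p + 1)) := by
    rw [innerApp]; congr 1; funext k; have := k.isLt
    simp only [w]; split_ifs <;> first | rfl | omega
  calc _ = compApp n F w (p + 1) := by
        rw [compApp, hblock]; congr 1; funext j; have := j.isLt
        simp only [w]; split_ifs <;> first | rfl | omega | exact congrArg z (by omega)
    _ = compApp n F w p := hA.compApp_eq w (by omega) (by omega)
    _ = _ := by
        rw [compApp, hshift]; congr 1; funext j; have := j.isLt
        simp only [w]; split_ifs <;> first | rfl | omega | exact congrArg z (by omega)

end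

theorem stmt6_general {X : Type*} [LinearOrder X] (n : ℕ)
    (F : (Fin n → X) → X) (hA : NAssoc n F) (hI : Idem n F) (hM : Nondecr n F)
    (x : ℕ → X) (i : ℕ) (hi : i + 3 ≤ n) :
    F (fun j => if (j : ℕ) ≤ i then x (j : ℕ) else x ((j : ℕ) - 1)) =
      F (fun j => if (j : ℕ) ≤ i + 1 then x (j : ℕ) else x ((j : ℕ) - 1)) := by
  set c : ℕ → X := fun j => if j ≤ i then x j else x (j - 1)
  set g : X → X := fun t => F (fun j => if (j : ℕ) = i + 1 then t else c j)
  have hg : Monotone g := hM.monotone.comp fun s t hst j => by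
    dsimp only; split_ifs; exacts [hst, le_rfl]
  have hLHS : g (x i) =
      F (fun j => if (j : ℕ) ≤ i then x (j : ℕ) else x ((j : ℕ) - 1)) := by
    dsimp only [g]; congr 1; funext j; simp only [c]
    split_ifs <;> first | rfl | omega | exact congrArg x (by omega)
  have hRHS : g (x (i + 1)) =
      F (fun j => if (j : ℕ) ≤ i + 1 then x (j : ℕ) else x ((j : ℕ) - 1)) := by
    dsimp only [g]; congr 1; funext j; simp only [c]
    split_ifs <;> first | rfl | omega | exact congrArg x (by omega)
  have hci : c i = x i := if_pos le_rfl
  have hci2 : c (i + 2) = x (i + 1) := if_neg (by omega)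
  rw [← hLHS, ← hRHS]
  refine hg.apply_eq_of_exchange (u := F fun k => if (k : ℕ) < n - 1 then x i else x (i + 1))
    (v := F fun k => if (k : ℕ) = 0 then x i else x (i + 1)) ?_ ?_
    (hM.apply_snoc_le_apply_cons (by omega)) (hM.apply_cons_le_apply_snoc (by omega))
  · rw [← hci]; exact (hA.absorb_left hI c (by omega) _).symm
  · rw [← hci2]; exact (hA.absorb_right hI c (p := i + 1) (by omega) _).symm

theorem stmt6 {X : Type*} [LinearOrder X] (n : ℕ) (hn : 3 ≤ n)
    (F : (Fin n → X) → X) (hA : NAssoc n F) (hI : Idem n F) (hM : Nondecr n F)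
    (x : ℕ → X) (i : ℕ) (hi : i + 3 ≤ n) :
    F (fun j => if (j : ℕ) ≤ i then x (j : ℕ) else x ((j : ℕ) - 1)) =
      F (fun j => if (j : ℕ) ≤ i + 1 then x (j : ℕ) else x ((j : ℕ) - 1)) :=
  stmt6_general n F hA hI hM x i hi
end

section
/- Let X be a totally ordered set and F : X^n → X an n-associative, symmetric, nondecreasing, idempotent function. Then F is extremal: F(x_1,...,x_n) = G(min_i x_i, max_i x_i) where G(a,c) = F(a,(n-1)·c), and consequently the value of F depends only on the minimum and maximum of its arguments. -/
open Function Finset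

theorem Finset.isLeast_range_univ_inf' {ι α : Type*} [Fintype ι] [LinearOrder α]
    (h : (univ : Finset ι).Nonempty) (x : ι → α) : IsLeast (Set.range x) (univ.inf' h x) :=
  ⟨(exists_mem_eq_inf' h x).imp fun _ hi => hi.2.symm,
    Set.forall_mem_range.2 fun j => inf'_le x (mem_univ j)⟩

theorem Finset.isGreatest_range_univ_sup' {ι α : Type*} [Fintype ι] [LinearOrder α]
    (h : (univ : Finset ι).Nonempty) (x : ι → α) : IsGreatest (Set.range x) (univ.sup' h x) :=
  ⟨(exists_mem_eq_sup' h x).imp fun _ hi => hi.2.symm,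
    Set.forall_mem_range.2 fun j => le_sup' x (mem_univ j)⟩

section

variable {X : Type*} {n : ℕ} {F : (Fin n → X) → X}

theorem Symm.apply_update_const_comm (hS : Symm n F) (i k : Fin n) (u v : X) :
    F (update (fun _ => v) i u) = F (update (fun _ => v) k u) := by
  have h := hS (Equiv.swap i k) (update (fun _ => v) k u)
  rwa [update_comp_equiv, Equiv.symm_swap, Equiv.swap_apply_right] at h

theorem Nondecr.apply_le_of_forall_le [Preorder X] (hM : Nondecr n F) (hI : Idem n F)
    {x : Fin n → X} {c : X} (hx : ∀ j, x j ≤ c) : F x ≤ c :=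
  hI c ▸ hM x (fun _ => c) hx

theorem Nondecr.apply_le_apply_update_const [Preorder X] (hM : Nondecr n F)
    {x : Fin n → X} {c : X} (hx : ∀ j, x j ≤ c) (i : Fin n) :
    F x ≤ F (update (fun _ => c) i (x i)) :=
  hM _ _ (le_update_iff.2 ⟨le_rfl, fun j _ => hx j⟩)

theorem Nondecr.apply_update_const_le_apply [Preorder X] (hM : Nondecr n F)
    {x : Fin n → X} {a : X} (hx : ∀ j, a ≤ x j) (i : Fin n) :
    F (update (fun _ => a) i (x i)) ≤ F x :=
  hM _ _ (update_le_iff.2 ⟨le_rfl, fun j _ => hx j⟩)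

/-- The two bracketings of `(a, …, a, c, …, c)` (`n` copies of `a`, `n - 1` of `c`)
allowed by `n`-associativity. -/
theorem NAssoc.apply_update_last_apply_update_zero (hA : NAssoc n F) (hI : Idem n F)
    (hn : 0 < n) (a c : X) :
    F (update (fun _ => a) ⟨n - 1, by omega⟩ (F (update (fun _ => c) ⟨0, hn⟩ a))) =
      F (update (fun _ => c) ⟨0, hn⟩ a) := by
  set z : ℕ → X := fun i => if i < n then a else c
  have hinner_zero : innerApp n F z 0 = a := by
    simpa [innerApp, z] using hI a
  have hinner_last : innerApp n F z (n - 1) = F (update (fun _ => c) ⟨0, hn⟩ a) := by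
    unfold innerApp
    congr 1
    funext k
    by_cases hk : (k : ℕ) = 0
    · simp [z, update, Fin.ext_iff, hk, hn]
    · simp [z, update, Fin.ext_iff, hk]; omega
  have hleft : compApp n F z 0 = F (update (fun _ => c) ⟨0, hn⟩ a) := by
    rw [compApp, hinner_zero]
    congr 1
    funext j
    by_cases hj : (j : ℕ) = 0
    · simp [update, Fin.ext_iff, hj]
    · simp [z, update, Fin.ext_iff, hj]; omega
  have hright : compApp n F z (n - 1) =
      F (update (fun _ => a) ⟨n - 1, by omega⟩ (F (update (fun _ => c) ⟨0, hn⟩ a))) := by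
    rw [compApp, hinner_last]
    congr 1
    funext j
    by_cases hj : (j : ℕ) = n - 1
    · simp [update, Fin.ext_iff, hj]
    · have : (j : ℕ) < n - 1 := by omega
      simp [z, update, Fin.ext_iff, hj, this]
  rw [← hright, hA z (n - 1) le_rfl, hleft]

theorem apply_eq_apply_update_of_isLeast_of_isGreatest [PartialOrder X] (hA : NAssoc n F)
    (hS : Symm n F) (hM : Nondecr n F) (hI : Idem n F) (hn : 0 < n) {x : Fin n → X} {a c : X}
    (ha : IsLeast (Set.range x) a) (hc : IsGreatest (Set.range x) c) :
    F x = F (update (fun _ => c) ⟨0, hn⟩ a) := by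
  obtain ⟨⟨i₀, rfl⟩, hmin⟩ := ha
  obtain ⟨⟨i₁, rfl⟩, hmax⟩ := hc
  have hlow : ∀ j, x i₀ ≤ x j := fun j => hmin ⟨j, rfl⟩
  have hupp : ∀ j, x j ≤ x i₁ := fun j => hmax ⟨j, rfl⟩
  set T := F (update (fun _ => x i₁) ⟨0, hn⟩ (x i₀))
  have hT : T ≤ x i₁ := hM.apply_le_of_forall_le hI fun j => by
    rcases eq_or_ne j ⟨0, hn⟩ with rfl | hj
    · simpa using hlow i₁
    · simp [hj]
  apply le_antisymm
  · calc F x ≤ F (update (fun _ => x i₁) i₀ (x i₀)) := hM.apply_le_apply_update_const hupp i₀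
      _ = T := hS.apply_update_const_comm _ _ _ _
  · calc T = F (update (fun _ => x i₀) ⟨n - 1, by omega⟩ T) :=
          (hA.apply_update_last_apply_update_zero hI hn _ _).symm
      _ ≤ F (update (fun _ => x i₀) ⟨n - 1, by omega⟩ (x i₁)) :=
          hM _ _ (update_le_update_iff'.2 hT)
      _ = F (update (fun _ => x i₀) i₁ (x i₁)) := hS.apply_update_const_comm _ _ _ _
      _ ≤ F x := hM.apply_update_const_le_apply hlow i₁

end

theorem stmt19 {X : Type*} [LinearOrder X] (n : ℕ) (hn : 2 ≤ n)
    (F : (Fin n → X) → X) (hA : NAssoc n F) (hS : Symm n F)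
    (hM : Nondecr n F) (hI : Idem n F) :
    (∀ x : Fin n → X,
      F x = F (fun j => if (j : ℕ) = 0
        then Finset.univ.inf' ⟨⟨0, by omega⟩, Finset.mem_univ _⟩ x
        else Finset.univ.sup' ⟨⟨0, by omega⟩, Finset.mem_univ _⟩ x)) ∧
    (∀ x y : Fin n → X,
      Finset.univ.inf' ⟨⟨0, by omega⟩, Finset.mem_univ _⟩ x =
        Finset.univ.inf' ⟨⟨0, by omega⟩, Finset.mem_univ _⟩ y →
      Finset.univ.sup' ⟨⟨0, by omega⟩, Finset.mem_univ _⟩ x =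
        Finset.univ.sup' ⟨⟨0, by omega⟩, Finset.mem_univ _⟩ y →
      F x = F y) := by
  have hne : (univ : Finset (Fin n)).Nonempty := ⟨⟨0, by omega⟩, mem_univ _⟩
  have extremal : ∀ x : Fin n → X,
      F x = F (fun j => if (j : ℕ) = 0 then univ.inf' hne x else univ.sup' hne x) := by
    intro x
    have hupdate : (fun j : Fin n => if (j : ℕ) = 0 then univ.inf' hne x else univ.sup' hne x) =
        update (fun _ => univ.sup' hne x) ⟨0, by omega⟩ (univ.inf' hne x) := by
      funext j
      simp [update, Fin.ext_iff]
    rw [hupdate]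
    exact apply_eq_apply_update_of_isLeast_of_isGreatest hA hS hM hI _
      (isLeast_range_univ_inf' hne x) (isGreatest_range_univ_sup' hne x)
  refine ⟨extremal, fun x y hmin hmax => ?_⟩
  rw [extremal x, extremal y, hmin, hmax]
end
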